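/- The map Ψ : (0,∞) × ℝ³ → ℝ⁴ sending (ρ, φ, y', z') to (w, x, y, z) = (1/D)·(1 − ρ² − φ²/4 − 2y'² − 2z'², φ, 2√2 y', 2√2 z') with D = (1 + ρ)² + φ²/4 + 2y'² + 2z'², is a bijection onto the open unit ball in ℝ⁴, with inverse (ρ, φ, y', z') = (1/E)·(1 − w² − x² − y² − z², 4x, √2 y, √2 z) where E = (1 + w)² + x² + y² + z². -/

import Mathlib

/-!
In the rescaled coordinates `v = (ρ, φ/2, √2 y', √2 z')` the map `Psi` is the Cayley transform
`v ↦ (1 - |v|², 2 v₁, 2 v₂, 2 v₃) / |e₀ + v|²` from the half-space `v₀ > 0` to the unit ball, and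
`PsiInv` is the same involutive formula read in the ball's coordinates. Both inverse laws follow from
`1 - |Psi p|² = 4ρ / D` and `E (Psi p) = 4 / D` (with `D = Psi.denom p`, `E = PsiInv.denom`), and
their mirror images with the roles of `Psi` and `PsiInv` exchanged.
-/

/-- Coordinate change from `ℝ_{>0} × ℝ³` to the real unit 4-ball. -/
noncomputable def Psi (p : ℝ × ℝ × ℝ × ℝ) : ℝ × ℝ × ℝ × ℝ :=
  let ρ := p.1; let φ := p.2.1; let y' := p.2.2.1; let z' := p.2.2.2
  let D := (1 + ρ)^2 + φ^2/4 + 2*y'^2 + 2*z'^2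
  ((1 - ρ^2 - φ^2/4 - 2*y'^2 - 2*z'^2) / D, φ / D,
    2 * Real.sqrt 2 * y' / D, 2 * Real.sqrt 2 * z' / D)

/-- The inverse coordinate change. -/
noncomputable def PsiInv (q : ℝ × ℝ × ℝ × ℝ) : ℝ × ℝ × ℝ × ℝ :=
  let w := q.1; let x := q.2.1; let y := q.2.2.1; let z := q.2.2.2
  let E := (1 + w)^2 + x^2 + y^2 + z^2
  ((1 - w^2 - x^2 - y^2 - z^2) / E, 4 * x / E,
    Real.sqrt 2 * y / E, Real.sqrt 2 * z / E)

open Real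

noncomputable def Psi.denom (p : ℝ × ℝ × ℝ × ℝ) : ℝ :=
  (1 + p.1)^2 + p.2.1^2/4 + 2*p.2.2.1^2 + 2*p.2.2.2^2

def PsiInv.denom (q : ℝ × ℝ × ℝ × ℝ) : ℝ :=
  (1 + q.1)^2 + q.2.1^2 + q.2.2.1^2 + q.2.2.2^2

lemma Psi_apply (p : ℝ × ℝ × ℝ × ℝ) : Psi p =
    ((1 - p.1^2 - p.2.1^2/4 - 2*p.2.2.1^2 - 2*p.2.2.2^2) / Psi.denom p, p.2.1 / Psi.denom p,
      2 * √2 * p.2.2.1 / Psi.denom p, 2 * √2 * p.2.2.2 / Psi.denom p) := rfl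

lemma PsiInv_apply (q : ℝ × ℝ × ℝ × ℝ) : PsiInv q =
    ((1 - q.1^2 - q.2.1^2 - q.2.2.1^2 - q.2.2.2^2) / PsiInv.denom q, 4 * q.2.1 / PsiInv.denom q,
      √2 * q.2.2.1 / PsiInv.denom q, √2 * q.2.2.2 / PsiInv.denom q) := rfl

lemma Psi.denom_pos {p : ℝ × ℝ × ℝ × ℝ} (hp : 0 < p.1) : 0 < Psi.denom p := by
  unfold Psi.denom; positivity

lemma PsiInv.denom_pos {q : ℝ × ℝ × ℝ × ℝ} (hq : q.1^2 + q.2.1^2 + q.2.2.1^2 + q.2.2.2^2 < 1) :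
    0 < PsiInv.denom q := by
  have hw : 0 < 1 + q.1 := by nlinarith [sq_nonneg q.2.1, sq_nonneg q.2.2.1, sq_nonneg q.2.2.2]
  unfold PsiInv.denom; positivity

lemma one_sub_sq_Psi {p : ℝ × ℝ × ℝ × ℝ} (hD : Psi.denom p ≠ 0) :
    1 - (Psi p).1^2 - (Psi p).2.1^2 - (Psi p).2.2.1^2 - (Psi p).2.2.2^2 = 4 * p.1 / Psi.denom p := by
  simp only [Psi_apply, div_pow, mul_pow, sq_sqrt zero_le_two]
  field_simp
  unfold Psi.denom
  ring

lemma PsiInv.denom_Psi {p : ℝ × ℝ × ℝ × ℝ} (hD : Psi.denom p ≠ 0) :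
    PsiInv.denom (Psi p) = 4 / Psi.denom p := by
  simp only [PsiInv.denom, Psi_apply, div_pow, mul_pow, sq_sqrt zero_le_two]
  field_simp
  unfold Psi.denom
  ring

lemma one_sub_sq_PsiInv {q : ℝ × ℝ × ℝ × ℝ} (hE : PsiInv.denom q ≠ 0) :
    1 - (PsiInv q).1^2 - (PsiInv q).2.1^2/4 - 2*(PsiInv q).2.2.1^2 - 2*(PsiInv q).2.2.2^2
      = 4 * q.1 / PsiInv.denom q := by
  simp only [PsiInv_apply, div_pow, mul_pow, sq_sqrt zero_le_two]
  field_simp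
  unfold PsiInv.denom
  ring

lemma Psi.denom_PsiInv {q : ℝ × ℝ × ℝ × ℝ} (hE : PsiInv.denom q ≠ 0) :
    Psi.denom (PsiInv q) = 4 / PsiInv.denom q := by
  simp only [Psi.denom, PsiInv_apply, div_pow, mul_pow, sq_sqrt zero_le_two]
  field_simp
  unfold PsiInv.denom
  ring

lemma PsiInv_Psi {p : ℝ × ℝ × ℝ × ℝ} (hp : 0 < p.1) : PsiInv (Psi p) = p := by
  have hD := (Psi.denom_pos hp).ne'
  rw [PsiInv_apply, PsiInv.denom_Psi hD, one_sub_sq_Psi hD, Psi_apply]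
  ext <;> field_simp <;> norm_num <;> ring

lemma Psi_PsiInv {q : ℝ × ℝ × ℝ × ℝ} (hq : q.1^2 + q.2.1^2 + q.2.2.1^2 + q.2.2.2^2 < 1) :
    Psi (PsiInv q) = q := by
  have hE := (PsiInv.denom_pos hq).ne'
  rw [Psi_apply, Psi.denom_PsiInv hE, one_sub_sq_PsiInv hE, PsiInv_apply]
  ext <;> field_simp <;> norm_num <;> ring

lemma Psi_mapsTo :
    Set.MapsTo Psi {p | 0 < p.1} {q | q.1^2 + q.2.1^2 + q.2.2.1^2 + q.2.2.2^2 < 1} := by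
  intro p (hp : 0 < p.1)
  have hD := Psi.denom_pos hp
  have h := one_sub_sq_Psi hD.ne'
  have : 0 < 4 * p.1 / Psi.denom p := by positivity
  rw [Set.mem_ofPred_eq]
  linarith

lemma PsiInv_mapsTo :
    Set.MapsTo PsiInv {q | q.1^2 + q.2.1^2 + q.2.2.1^2 + q.2.2.2^2 < 1} {p | 0 < p.1} := by
  intro q hq
  exact div_pos (by linarith [hq.out]) (PsiInv.denom_pos hq)

theorem Psi_bijection :
    Set.BijOn Psi {p : ℝ × ℝ × ℝ × ℝ | 0 < p.1}
      {q : ℝ × ℝ × ℝ × ℝ | q.1^2 + q.2.1^2 + q.2.2.1^2 + q.2.2.2^2 < 1} ∧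
    (∀ p ∈ {p : ℝ × ℝ × ℝ × ℝ | 0 < p.1}, PsiInv (Psi p) = p) ∧
    (∀ q ∈ {q : ℝ × ℝ × ℝ × ℝ | q.1^2 + q.2.1^2 + q.2.2.1^2 + q.2.2.2^2 < 1},
      Psi (PsiInv q) = q) := by
  have hleft : ∀ p ∈ {p : ℝ × ℝ × ℝ × ℝ | 0 < p.1}, PsiInv (Psi p) = p :=
    fun _ hp => PsiInv_Psi hp
  have hright : ∀ q ∈ {q : ℝ × ℝ × ℝ × ℝ | q.1^2 + q.2.1^2 + q.2.2.1^2 + q.2.2.2^2 < 1},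
      Psi (PsiInv q) = q :=
    fun _ hq => Psi_PsiInv hq
  exact ⟨Set.InvOn.bijOn ⟨hleft, hright⟩ Psi_mapsTo PsiInv_mapsTo, hleft, hright⟩
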